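/- arXiv:1402.2214 — 2 statements merged into one kernel-verified Lean document; each statement's English description precedes it below -/
import Mathlib

section
/- Let ω : A × B → k be a non-degenerate Hopf pairing with inverse copairing ω' = Σ_i b_i ⊗ a_i ∈ B ⊗ A. Then: (1) the inverse copairing is unique, i.e. any element Σ_j c_j ⊗ d_j ∈ B ⊗ A satisfying the same two identities equals ω'; (2) ω' is a Hopf copairing, i.e. Σ_i (b_i)_{(1)} ⊗ (b_i)_{(2)} ⊗ a_i = Σ_{i,j} b_i ⊗ b_j ⊗ a_j a_i, Σ_i ε_B(b_i) a_i = 1_A, Σ_i b_i ⊗ (a_i)_{(1)} ⊗ (a_i)_{(2)} = Σ_{i,j} b_i b_j ⊗ a_j ⊗ a_i, and Σ_i ε_A(a_i) b_i = 1_B; (3) the Hopf pairings ω⁺(b,a) = ω(S_A(a), S_B(b)) and ω⁻(b,a) = ω(S_A⁻¹(a), S_B⁻¹(b)) (when the antipodes are bijective) are non-degenerate, with inverse copairings Σ_i S_A⁻¹(a_i) ⊗ S_B⁻¹(b_i) and Σ_i S_A(a_i) ⊗ S_B(b_i) respectively. -/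
/-!
An inverse copairing `Σᵢ bᵢ ⊗ aᵢ` makes `(ω(-, bᵢ), aᵢ)` a finite dual basis of `A` and
`(ω(aᵢ, -), bᵢ)` one of `B`. Consequently an element of `V ⊗ A` is determined by its contractions
against the `bᵢ`, and an element of `B ⊗ W` by its contractions against the `aᵢ`. After such a
contraction, uniqueness and the copairing identities reduce to the pairing axioms together with
the fact that the products `ω(aᵢ, -) ω(aⱼ, -)` and `bᵢ ⊗ bⱼ` form a dual basis of `B ⊗ B`
(and likewise for `A ⊗ A`). The statements about `ω⁺` and `ω⁻` are the dual basis property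
transported along the antipodes and their inverses.
-/

open TensorProduct

noncomputable section

variable {k : Type*} [Field k]

/-- A Hopf pairing between the Hopf algebras `A` and `B` over the field `k`. -/
structure IsHopfPairing {A B : Type*} [Ring A] [HopfAlgebra k A] [Ring B] [HopfAlgebra k B]
    (ω : A →ₗ[k] B →ₗ[k] k) : Prop where
  mul_left : ∀ (a a' : A) (b : B),
    ω (a * a') b =
      (LinearMap.mul' k k ∘ₗ TensorProduct.map (ω a') (ω a)) (Coalgebra.comul (R := k) b)
  one_left : ∀ b : B, ω 1 b = Coalgebra.counit (R := k) b
  mul_right : ∀ (a : A) (b b' : B),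
    ω a (b * b') =
      (LinearMap.mul' k k ∘ₗ TensorProduct.map (ω.flip b') (ω.flip b)) (Coalgebra.comul (R := k) a)
  one_right : ∀ a : A, ω a 1 = Coalgebra.counit (R := k) a

/-- The family `Σᵢ bᵢ ⊗ aᵢ` is an inverse copairing for the pairing `ω : A × B → k`,
i.e. `Σᵢ ω(x, bᵢ) aᵢ = x` for all `x ∈ A` and `Σᵢ ω(aᵢ, y) bᵢ = y` for all `y ∈ B`;
the existence of such a family is non-degeneracy of `ω`. -/
def IsInverseCopairing {A B : Type*} [Ring A] [HopfAlgebra k A] [Ring B] [HopfAlgebra k B]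
    (ω : A →ₗ[k] B →ₗ[k] k) {n : ℕ} (b : Fin n → B) (a : Fin n → A) : Prop :=
  (∀ x : A, ∑ i, ω x (b i) • a i = x) ∧ (∀ y : B, ∑ i, ω (a i) y • b i = y)

section FiniteDualBasis

variable {R M : Type*} [CommSemiring R] [AddCommMonoid M] [Module R M]
  {ι : Type*} [Fintype ι]

def IsFiniteDualBasis (f : ι → Module.Dual R M) (m : ι → M) : Prop :=
  ∀ x, ∑ i, f i x • m i = x

namespace IsFiniteDualBasis

variable {f : ι → Module.Dual R M} {m : ι → M}

theorem sum_rid_lTensor_tmul (h : IsFiniteDualBasis f m) {V : Type*} [AddCommMonoid V]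
    [Module R V] (t : V ⊗[R] M) :
    ∑ i, TensorProduct.rid R V ((f i).lTensor V t) ⊗ₜ[R] m i = t := by
  induction t using TensorProduct.induction_on with
  | zero => simp
  | tmul v x =>
    simp only [LinearMap.lTensor_tmul, TensorProduct.rid_tmul, smul_tmul, ← tmul_sum, h x]
  | add s t hs ht => simp only [map_add, add_tmul, Finset.sum_add_distrib, hs, ht]

theorem sum_tmul_lid_rTensor (h : IsFiniteDualBasis f m) {W : Type*} [AddCommMonoid W]
    [Module R W] (t : M ⊗[R] W) :
    ∑ i, m i ⊗ₜ[R] TensorProduct.lid R W ((f i).rTensor W t) = t := by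
  induction t using TensorProduct.induction_on with
  | zero => simp
  | tmul x w =>
    simp only [LinearMap.rTensor_tmul, TensorProduct.lid_tmul, tmul_smul, smul_tmul', ← sum_tmul,
      h x]
  | add s t hs ht => simp only [map_add, tmul_add, Finset.sum_add_distrib, hs, ht]

theorem ext_lTensor (h : IsFiniteDualBasis f m) {V : Type*} [AddCommMonoid V] [Module R V]
    {s t : V ⊗[R] M}
    (hst : ∀ i, TensorProduct.rid R V ((f i).lTensor V s) =
      TensorProduct.rid R V ((f i).lTensor V t)) : s = t := by
  rw [← h.sum_rid_lTensor_tmul s, ← h.sum_rid_lTensor_tmul t]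
  simp only [hst]

theorem ext_rTensor (h : IsFiniteDualBasis f m) {W : Type*} [AddCommMonoid W] [Module R W]
    {s t : M ⊗[R] W}
    (hst : ∀ i, TensorProduct.lid R W ((f i).rTensor W s) =
      TensorProduct.lid R W ((f i).rTensor W t)) : s = t := by
  rw [← h.sum_tmul_lid_rTensor s, ← h.sum_tmul_lid_rTensor t]
  simp only [hst]

theorem sum_sum_mul'_map_smul_tmul (h : IsFiniteDualBasis f m) (z : M ⊗[R] M) :
    ∑ i, ∑ j, LinearMap.mul' R R (map (f i) (f j) z) • (m i ⊗ₜ[R] m j) = z := by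
  induction z using TensorProduct.induction_on with
  | zero => simp
  | tmul x y =>
    calc ∑ i, ∑ j, LinearMap.mul' R R (map (f i) (f j) (x ⊗ₜ y)) • (m i ⊗ₜ[R] m j)
        = ∑ i, ∑ j, (f i x • m i) ⊗ₜ[R] (f j y • m j) := by
          simp only [map_tmul, LinearMap.mul'_apply, smul_tmul_smul]
      _ = x ⊗ₜ y := by simp only [← tmul_sum, ← sum_tmul, h x, h y]
  | add s t hs ht => simp only [map_add, add_smul, Finset.sum_add_distrib, hs, ht]

end IsFiniteDualBasis

end FiniteDualBasis

section InverseCopairing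

variable {A B : Type*} [Ring A] [HopfAlgebra k A] [Ring B] [HopfAlgebra k B]
  {ω : A →ₗ[k] B →ₗ[k] k} {n : ℕ} {b : Fin n → B} {a : Fin n → A}

namespace IsInverseCopairing

theorem isFiniteDualBasis_left (hcop : IsInverseCopairing ω b a) :
    IsFiniteDualBasis (fun i => ω.flip (b i)) a :=
  hcop.1

theorem isFiniteDualBasis_right (hcop : IsInverseCopairing ω b a) :
    IsFiniteDualBasis (fun i => ω (a i)) b :=
  hcop.2

theorem sum_tmul_eq (hcop : IsInverseCopairing ω b a) {m : ℕ} {c : Fin m → B} {d : Fin m → A}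
    (hcd : IsInverseCopairing ω c d) : ∑ i, b i ⊗ₜ[k] a i = ∑ j, c j ⊗ₜ[k] d j := by
  refine hcop.isFiniteDualBasis_left.ext_lTensor fun l => ?_
  simp only [map_sum, LinearMap.lTensor_tmul, TensorProduct.rid_tmul, LinearMap.flip_apply]
  rw [hcop.2, hcd.2]

theorem sum_comul_tmul (hω : IsHopfPairing ω) (hcop : IsInverseCopairing ω b a) :
    ∑ i, Coalgebra.comul (R := k) (b i) ⊗ₜ[k] a i
      = ∑ i, ∑ j, (b i ⊗ₜ[k] b j) ⊗ₜ[k] (a j * a i) := by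
  refine hcop.isFiniteDualBasis_left.ext_lTensor fun l => ?_
  simp only [map_sum, LinearMap.lTensor_tmul, TensorProduct.rid_tmul, LinearMap.flip_apply,
    hω.mul_left, LinearMap.comp_apply]
  calc ∑ i, ω (a i) (b l) • Coalgebra.comul (R := k) (b i)
      = Coalgebra.comul (R := k) (∑ i, ω (a i) (b l) • b i) := by simp only [map_sum, map_smul]
    _ = _ := by rw [hcop.2, hcop.isFiniteDualBasis_right.sum_sum_mul'_map_smul_tmul]

theorem sum_tmul_comul (hω : IsHopfPairing ω) (hcop : IsInverseCopairing ω b a) :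
    ∑ i, b i ⊗ₜ[k] Coalgebra.comul (R := k) (a i)
      = ∑ i, ∑ j, (b i * b j) ⊗ₜ[k] (a j ⊗ₜ[k] a i) := by
  refine hcop.isFiniteDualBasis_right.ext_rTensor fun l => ?_
  simp only [map_sum, LinearMap.rTensor_tmul, TensorProduct.lid_tmul, hω.mul_right,
    LinearMap.comp_apply]
  calc ∑ i, ω (a l) (b i) • Coalgebra.comul (R := k) (a i)
      = Coalgebra.comul (R := k) (∑ i, ω (a l) (b i) • a i) := by simp only [map_sum, map_smul]
    _ = _ := by
      rw [hcop.1, Finset.sum_comm, hcop.isFiniteDualBasis_left.sum_sum_mul'_map_smul_tmul]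

theorem sum_counit_smul_left (hω : IsHopfPairing ω) (hcop : IsInverseCopairing ω b a) :
    ∑ i, Coalgebra.counit (R := k) (b i) • a i = 1 := by
  simpa only [hω.one_left] using hcop.1 1

theorem sum_counit_smul_right (hω : IsHopfPairing ω) (hcop : IsInverseCopairing ω b a) :
    ∑ i, Coalgebra.counit (R := k) (a i) • b i = 1 := by
  simpa only [hω.one_right] using hcop.2 1

theorem swap (hcop : IsInverseCopairing ω b a) (eA : A ≃ₗ[k] A) (eB : B ≃ₗ[k] B)
    {ω' : B →ₗ[k] A →ₗ[k] k} (hω' : ∀ y x, ω' y x = ω (eA x) (eB y)) :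
    IsInverseCopairing ω' (fun i => eA.symm (a i)) (fun i => eB.symm (b i)) := by
  constructor
  · intro y
    simp only [hω', LinearEquiv.apply_symm_apply, ← map_smul, ← map_sum, hcop.2]
    exact eB.symm_apply_apply y
  · intro x
    simp only [hω', LinearEquiv.apply_symm_apply, ← map_smul, ← map_sum, hcop.1]
    exact eA.symm_apply_apply x

end IsInverseCopairing

end InverseCopairing

/-- For a non-degenerate Hopf pairing `ω : A × B → k` with inverse
copairing `ω' = Σᵢ bᵢ ⊗ aᵢ`: (1) the inverse copairing is unique as an element of
`B ⊗ A`; (2) it is a Hopf copairing; (3) the Hopf pairings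
`ω⁺(b,a) = ω(S_A a, S_B b)` and `ω⁻(b,a) = ω(S_A⁻¹ a, S_B⁻¹ b)` are non-degenerate,
with inverse copairings `Σᵢ S_A⁻¹(aᵢ) ⊗ S_B⁻¹(bᵢ)` and `Σᵢ S_A(aᵢ) ⊗ S_B(bᵢ)`. -/
theorem inverse_copairing_properties {A B : Type*} [Ring A] [HopfAlgebra k A] [Ring B]
    [HopfAlgebra k B] (ω : A →ₗ[k] B →ₗ[k] k) (hω : IsHopfPairing ω)
    {n : ℕ} (b : Fin n → B) (a : Fin n → A) (hcop : IsInverseCopairing ω b a)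
    (SA' : A →ₗ[k] A) (SB' : B →ₗ[k] B)
    (hSA : SA' ∘ₗ HopfAlgebra.antipode (R := k) = LinearMap.id ∧
      HopfAlgebra.antipode (R := k) ∘ₗ SA' = LinearMap.id)
    (hSB : SB' ∘ₗ HopfAlgebra.antipode (R := k) = LinearMap.id ∧
      HopfAlgebra.antipode (R := k) ∘ₗ SB' = LinearMap.id)
    (ωplus ωminus : B →ₗ[k] A →ₗ[k] k)
    (hplus : ∀ (y : B) (x : A),
      ωplus y x = ω (HopfAlgebra.antipode (R := k) x) (HopfAlgebra.antipode (R := k) y))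
    (hminus : ∀ (y : B) (x : A), ωminus y x = ω (SA' x) (SB' y)) :
    -- (1) uniqueness of the inverse copairing
    (∀ {m : ℕ} (c : Fin m → B) (d : Fin m → A), IsInverseCopairing ω c d →
      ∑ i, b i ⊗ₜ[k] a i = ∑ j, c j ⊗ₜ[k] d j)
    -- (2) the inverse copairing is a Hopf copairing
    ∧ (∑ i, (Coalgebra.comul (R := k) (b i)) ⊗ₜ[k] (a i)
        = ∑ i, ∑ j, ((b i) ⊗ₜ[k] (b j)) ⊗ₜ[k] ((a j) * (a i)))
    ∧ (∑ i, Coalgebra.counit (R := k) (b i) • a i = (1 : A))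
    ∧ (∑ i, (b i) ⊗ₜ[k] (Coalgebra.comul (R := k) (a i))
        = ∑ i, ∑ j, ((b i) * (b j)) ⊗ₜ[k] ((a j) ⊗ₜ[k] (a i)))
    ∧ (∑ i, Coalgebra.counit (R := k) (a i) • b i = (1 : B))
    -- (3) `ω⁺` and `ω⁻` are non-degenerate with the indicated inverse copairings
    ∧ IsInverseCopairing ωplus (fun i => SA' (a i)) (fun i => SB' (b i))
    ∧ IsInverseCopairing ωminus (fun i => HopfAlgebra.antipode (R := k) (a i))
        (fun i => HopfAlgebra.antipode (R := k) (b i)) :=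
  ⟨fun _ _ hcd => hcop.sum_tmul_eq hcd, hcop.sum_comul_tmul hω,
    hcop.sum_counit_smul_left hω, hcop.sum_tmul_comul hω, hcop.sum_counit_smul_right hω,
    hcop.swap (.ofLinearMap _ _ hSA.2 hSA.1) (.ofLinearMap _ _ hSB.2 hSB.1) hplus,
    hcop.swap (.ofLinearMap _ _ hSA.1 hSA.2) (.ofLinearMap _ _ hSB.1 hSB.2) hminus⟩

end
end

section
/- Let ω : A × B → k be a non-degenerate Hopf pairing with inverse copairing ω' = Σ_i b_i ⊗ a_i, and let X be a k-vector space. Then: (1) if δ : X → B ⊗ X, δ(x) = x_{(-1)} ⊗ x_{(0)}, is a left B-comodule structure on X, then a·x := ω(a, x_{(-1)}) x_{(0)} defines a left A-module structure on X; (2) if ρ : A ⊗ X → X is a left A-module structure on X, then δ(x) := Σ_i b_i ⊗ ρ(a_i ⊗ x) defines a left B-comodule structure on X; (3) these two assignments are mutually inverse bijections between the set of left B-comodule structures on X and the set of left A-module structures on X. -/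
open TensorProduct

noncomputable section

variable {k : Type*} [Field k]

variable {A B X : Type*} [Ring A] [HopfAlgebra k A] [Ring B] [HopfAlgebra k B]
  [AddCommGroup X] [Module k X]

/-- `δ : X → B ⊗ X` is a left `B`-comodule structure: coassociativity and counitality. -/
def IsComodule (δ : X →ₗ[k] B ⊗[k] X) : Prop :=
  ((TensorProduct.assoc k B B X).toLinearMap
      ∘ₗ LinearMap.rTensor X (Coalgebra.comul (R := k)) ∘ₗ δ = LinearMap.lTensor B δ ∘ₗ δ)
  ∧ ((TensorProduct.lid k X).toLinearMap
      ∘ₗ LinearMap.rTensor X (Coalgebra.counit (R := k)) ∘ₗ δ = LinearMap.id)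

/-- `ρ : A → End(X)` is a left `A`-module structure: unitality and associativity
(bilinearity is built into the type). -/
def IsModuleStructure (ρ : A →ₗ[k] X →ₗ[k] X) : Prop :=
  ρ 1 = LinearMap.id ∧ ∀ a a' : A, ρ (a * a') = ρ a ∘ₗ ρ a'

/-- The `A`-action `a · x := ω(a, x₍₋₁₎) x₍₀₎` obtained from a `B`-coaction `δ`. -/
def actOf (ω : A →ₗ[k] B →ₗ[k] k) (δ : X →ₗ[k] B ⊗[k] X) : A →ₗ[k] X →ₗ[k] X where
  toFun a := (TensorProduct.lid k X).toLinearMap ∘ₗ LinearMap.rTensor X (ω a) ∘ₗ δ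
  map_add' a a' := by
    simp [map_add, LinearMap.rTensor_add, LinearMap.add_comp, LinearMap.comp_add]
  map_smul' c a := by
    simp [map_smul, LinearMap.rTensor_smul, LinearMap.smul_comp, LinearMap.comp_smul]

/-- The `B`-coaction `δ(x) := Σᵢ bᵢ ⊗ ρ(aᵢ)(x)` obtained from an `A`-action `ρ`
via the inverse copairing `Σᵢ bᵢ ⊗ aᵢ`. -/
def coactOf {n : ℕ} (b : Fin n → B) (a : Fin n → A) (ρ : A →ₗ[k] X →ₗ[k] X) :
    X →ₗ[k] B ⊗[k] X :=
  ∑ i, (TensorProduct.mk k B X (b i)) ∘ₗ (ρ (a i))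

/-! A coaction `δ` is recovered from the operators `x ↦ ω(a, x₍₋₁₎) x₍₀₎` by pairing its first
tensor leg against the inverse copairing, `y = Σᵢ ω(aᵢ, y) bᵢ`; in particular an element of
`B ⊗ Y` is determined by its slices by the functionals `ω(aᵢ, -)`. Coassociativity of `δ` and
associativity of the induced action are then the same identity seen through two such slices:
slicing `(Δ ⊗ id) δ` by `ω(a', -)` and `ω(a, -)` gives `ω(a a', x₍₋₁₎) x₍₀₎` because `ω` turns
the product of `A` into the convolution product dual to `Δ`, while slicing `(id ⊗ δ) δ` gives
`a · (a' · x)`. Counitality and unitality correspond likewise through `ω(1, -) = ε`. -/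

section Slice

variable {R M N Y Z : Type*} [CommSemiring R] [AddCommMonoid M] [Module R M]
  [AddCommMonoid N] [Module R N] [AddCommMonoid Y] [Module R Y] [AddCommMonoid Z] [Module R Z]

def slice (f : M →ₗ[R] R) : M ⊗[R] Y →ₗ[R] Y :=
  (TensorProduct.lid R Y).toLinearMap ∘ₗ LinearMap.rTensor Y f

@[simp]
lemma slice_tmul (f : M →ₗ[R] R) (m : M) (y : Y) : slice f (m ⊗ₜ[R] y) = f m • y := by
  simp [slice]

lemma slice_comp_rTensor (f : M →ₗ[R] R) (φ : N →ₗ[R] M) :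
    slice (Y := Y) f ∘ₗ LinearMap.rTensor Y φ = slice (f ∘ₗ φ) := by
  simp only [slice, LinearMap.comp_assoc, LinearMap.rTensor_comp]

lemma slice_comp_lTensor (f : M →ₗ[R] R) (g : Y →ₗ[R] Z) :
    slice f ∘ₗ LinearMap.lTensor M g = g ∘ₗ slice f := by
  apply TensorProduct.ext'
  intro m y
  simp

lemma slice_comp_slice_comp_assoc (f : M →ₗ[R] R) (g : N →ₗ[R] R) :
    slice g ∘ₗ slice f ∘ₗ (TensorProduct.assoc R M N Y).toLinearMap
      = slice (LinearMap.mul' R R ∘ₗ TensorProduct.map f g) := by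
  apply TensorProduct.ext_threefold
  intro m n y
  simp [mul_smul, smul_comm (f m) (g n)]

variable {ι : Type*} [Fintype ι]

lemma sum_tmul_slice_eq_self {f : ι → M →ₗ[R] R} {m : ι → M}
    (hfm : ∀ y, ∑ i, f i y • m i = y) (t : M ⊗[R] Y) :
    ∑ i, m i ⊗ₜ[R] slice (f i) t = t := by
  induction t using TensorProduct.induction_on with
  | zero => simp
  | tmul y x =>
    conv_rhs => rw [← hfm y]
    simp only [slice_tmul, sum_tmul, tmul_smul, smul_tmul']
  | add s t hs ht =>
    simp only [map_add, tmul_add, Finset.sum_add_distrib, hs, ht]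

lemma eq_of_slice_eq {f : ι → M →ₗ[R] R} {m : ι → M}
    (hfm : ∀ y, ∑ i, f i y • m i = y) {t t' : M ⊗[R] Y}
    (h : ∀ i, slice (f i) t = slice (f i) t') : t = t' := by
  rw [← sum_tmul_slice_eq_self hfm t, ← sum_tmul_slice_eq_self hfm t']
  simp only [h]

end Slice

lemma actOf_apply (ω : A →ₗ[k] B →ₗ[k] k) (δ : X →ₗ[k] B ⊗[k] X) (c : A) :
    actOf ω δ c = slice (ω c) ∘ₗ δ :=
  rfl

lemma coactOf_apply {n : ℕ} (b : Fin n → B) (a : Fin n → A) (ρ : A →ₗ[k] X →ₗ[k] X) (x : X) :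
    coactOf b a ρ x = ∑ i, b i ⊗ₜ[k] ρ (a i) x := by
  simp [coactOf, LinearMap.sum_apply]

lemma coactOf_actOf (ω : A →ₗ[k] B →ₗ[k] k) {n : ℕ} {b : Fin n → B} {a : Fin n → A}
    (hba : ∀ y : B, ∑ i, ω (a i) y • b i = y) (δ : X →ₗ[k] B ⊗[k] X) :
    coactOf b a (actOf ω δ) = δ := by
  ext x
  simp only [coactOf_apply, actOf_apply, LinearMap.comp_apply]
  exact sum_tmul_slice_eq_self hba (δ x)

lemma actOf_coactOf (ω : A →ₗ[k] B →ₗ[k] k) {n : ℕ} {b : Fin n → B} {a : Fin n → A}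
    (hab : ∀ c : A, ∑ i, ω c (b i) • a i = c) (ρ : A →ₗ[k] X →ₗ[k] X) :
    actOf ω (coactOf b a ρ) = ρ := by
  ext c x
  simp only [actOf_apply, LinearMap.comp_apply, coactOf_apply, map_sum, slice_tmul]
  calc ∑ i, ω c (b i) • ρ (a i) x = ρ (∑ i, ω c (b i) • a i) x := by
        simp [LinearMap.sum_apply]
    _ = ρ c x := by rw [hab c]

section Pairing

variable {ω : A →ₗ[k] B →ₗ[k] k}

lemma IsHopfPairing.actOf_one (hω : IsHopfPairing ω) (δ : X →ₗ[k] B ⊗[k] X) :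
    actOf ω δ 1 = slice (Coalgebra.counit (R := k)) ∘ₗ δ := by
  have hε : ω 1 = Coalgebra.counit (R := k) := LinearMap.ext hω.one_left
  rw [actOf_apply, hε]

lemma IsHopfPairing.slice_comp_slice_comp_coassoc (hω : IsHopfPairing ω) (c c' : A)
    (δ : X →ₗ[k] B ⊗[k] X) :
    slice (ω c) ∘ₗ slice (ω c') ∘ₗ ((TensorProduct.assoc k B B X).toLinearMap
      ∘ₗ LinearMap.rTensor X (Coalgebra.comul (R := k)) ∘ₗ δ) = actOf ω δ (c * c') := by
  have hmul : ω (c * c') = (LinearMap.mul' k k ∘ₗ TensorProduct.map (ω c') (ω c))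
      ∘ₗ Coalgebra.comul (R := k) := LinearMap.ext (hω.mul_left c c')
  rw [actOf_apply, hmul, ← slice_comp_rTensor, ← slice_comp_slice_comp_assoc]
  rfl

lemma slice_comp_slice_comp_lTensor (c c' : A) (δ : X →ₗ[k] B ⊗[k] X) :
    slice (ω c) ∘ₗ slice (ω c') ∘ₗ (LinearMap.lTensor B δ ∘ₗ δ)
      = actOf ω δ c ∘ₗ actOf ω δ c' := by
  rw [← LinearMap.comp_assoc δ, slice_comp_lTensor]
  rfl

lemma IsHopfPairing.isModuleStructure_actOf (hω : IsHopfPairing ω) {δ : X →ₗ[k] B ⊗[k] X}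
    (hδ : IsComodule δ) : IsModuleStructure (actOf ω δ) := by
  refine ⟨(hω.actOf_one δ).trans hδ.2, fun c c' => ?_⟩
  rw [← hω.slice_comp_slice_comp_coassoc, hδ.1, slice_comp_slice_comp_lTensor]

lemma IsHopfPairing.isComodule_coactOf (hω : IsHopfPairing ω) {n : ℕ} {b : Fin n → B}
    {a : Fin n → A} (hcop : IsInverseCopairing ω b a) {ρ : A →ₗ[k] X →ₗ[k] X}
    (hρ : IsModuleStructure ρ) : IsComodule (coactOf b a ρ) := by
  have hact := actOf_coactOf ω hcop.1 ρ
  refine ⟨?_, (hω.actOf_one _).symm.trans (by rw [hact]; exact hρ.1)⟩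
  ext x
  refine eq_of_slice_eq hcop.2 fun p => eq_of_slice_eq hcop.2 fun q => ?_
  have hpq : slice (ω (a q)) ∘ₗ slice (ω (a p)) ∘ₗ ((TensorProduct.assoc k B B X).toLinearMap
        ∘ₗ LinearMap.rTensor X (Coalgebra.comul (R := k)) ∘ₗ coactOf b a ρ)
      = slice (ω (a q)) ∘ₗ slice (ω (a p))
          ∘ₗ (LinearMap.lTensor B (coactOf b a ρ) ∘ₗ coactOf b a ρ) := by
    rw [hω.slice_comp_slice_comp_coassoc, slice_comp_slice_comp_lTensor, hact, hρ.2]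
  exact LinearMap.congr_fun hpq x

end Pairing

/-- For a non-degenerate Hopf pairing `ω : A × B → k` with inverse
copairing `Σᵢ bᵢ ⊗ aᵢ` and a `k`-vector space `X`: (1) every left `B`-comodule
structure on `X` induces a left `A`-module structure `a · x = ω(a, x₍₋₁₎) x₍₀₎`;
(2) every left `A`-module structure induces a left `B`-comodule structure
`x ↦ Σᵢ bᵢ ⊗ (aᵢ · x)`; (3) these two assignments are mutually inverse bijections. -/
theorem comodule_module_bijection (ω : A →ₗ[k] B →ₗ[k] k) (hω : IsHopfPairing ω)
    {n : ℕ} (b : Fin n → B) (a : Fin n → A) (hcop : IsInverseCopairing ω b a) :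
    (∀ δ : X →ₗ[k] B ⊗[k] X, IsComodule δ → IsModuleStructure (actOf ω δ))
    ∧ (∀ ρ : A →ₗ[k] X →ₗ[k] X, IsModuleStructure ρ → IsComodule (coactOf b a ρ))
    ∧ (∀ δ : X →ₗ[k] B ⊗[k] X, IsComodule δ → coactOf b a (actOf ω δ) = δ)
    ∧ (∀ ρ : A →ₗ[k] X →ₗ[k] X, IsModuleStructure ρ → actOf ω (coactOf b a ρ) = ρ) :=
  ⟨fun _ hδ => hω.isModuleStructure_actOf hδ, fun _ hρ => hω.isComodule_coactOf hcop hρ,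
    fun δ _ => coactOf_actOf ω hcop.2 δ, fun ρ _ => actOf_coactOf ω hcop.1 ρ⟩

end
end
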